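/- Let P be a finite set of points in ℝ², let s, t ∈ P with s ≠ t, and let λ ≥ 0. Suppose there exists some r > 0 such that s and t are connected in the L1 unit-disk graph G_r(P) with weighted shortest-path distance d_r(s,t) ≤ λ. Then the set F = { r > 0 : s and t are connected in G_r(P) and d_r(s,t) ≤ λ } has a least element r*, and r* equals the L1 distance ‖p − q‖₁ of two distinct points p, q ∈ P. -/

import Mathlib

/-!
The graph `G_r(P)` changes only when `r` crosses one of the finitely many pairwise L1 distances
of `P`. Lowering a feasible `r` to the largest such distance not exceeding it leaves the graph,
hence reachability and `d_r(s,t)`, unchanged; and `s ≠ t` guarantees a first edge on an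
`s`–`t` walk, so this distance exists. The feasible set is therefore controlled by its finitely
many members among the pairwise distances, and the least of those is its least element.
-/

/-- The L1 distance between two points of the plane. -/
def l1dist (p q : ℝ × ℝ) : ℝ := |p.1 - q.1| + |p.2 - q.2|

theorem l1dist_comm (p q : ℝ × ℝ) : l1dist p q = l1dist q p := by
  unfold l1dist
  rw [abs_sub_comm p.1 q.1, abs_sub_comm p.2 q.2]

/-- The L1 unit-disk graph of a finite point set `P ⊆ ℝ²` with parameter `r`:
two distinct points are adjacent iff their L1 distance is at most `r`. -/
noncomputable def l1UnitDiskGraph (P : Finset (ℝ × ℝ)) (r : ℝ) :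
    SimpleGraph {p // p ∈ P} where
  Adj p q := p ≠ q ∧ l1dist (p : ℝ × ℝ) (q : ℝ × ℝ) ≤ r
  symm := by
    constructor
    intro p q h
    exact ⟨h.1.symm, by rw [l1dist_comm]; exact h.2⟩
  loopless := by
    constructor
    intro p h
    exact h.1 rfl

/-- The total L1 weight of a walk in the L1 unit-disk graph:
the sum of the L1 distances between the endpoints of its edges. -/
noncomputable def l1WalkWeight {P : Finset (ℝ × ℝ)} {r : ℝ}
    {u v : {p // p ∈ P}} (w : (l1UnitDiskGraph P r).Walk u v) : ℝ :=
  (w.edges.map (Sym2.lift ⟨fun (a b : {p // p ∈ P}) => l1dist a.1 b.1,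
    fun a b => l1dist_comm a.1 b.1⟩)).sum

/-- The weighted shortest-path distance in the L1 unit-disk graph: the minimum
total L1 weight of a walk joining two vertices. -/
noncomputable def l1wdist (P : Finset (ℝ × ℝ)) (r : ℝ) (u v : {p // p ∈ P}) : ℝ :=
  sInf {x : ℝ | ∃ w : (l1UnitDiskGraph P r).Walk u v, l1WalkWeight w = x}

lemma l1dist_pos {p q : ℝ × ℝ} (h : p ≠ q) : 0 < l1dist p q := by
  obtain h₁ | h₂ : p.1 ≠ q.1 ∨ p.2 ≠ q.2 := by
    by_contra! h'
    exact h (Prod.ext h'.1 h'.2)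
  · exact add_pos_of_pos_of_nonneg (abs_pos.mpr (sub_ne_zero.mpr h₁)) (abs_nonneg _)
  · exact add_pos_of_nonneg_of_pos (abs_nonneg _) (abs_pos.mpr (sub_ne_zero.mpr h₂))

lemma Set.exists_mem_isLeast_of_forall_exists_le {α : Type*} [LinearOrder α] {F S : Set α}
    (hS : S.Finite) (hF : F.Nonempty) (h : ∀ x ∈ F, ∃ y ∈ F ∩ S, y ≤ x) :
    ∃ m ∈ S, IsLeast F m := by
  obtain ⟨x, hx⟩ := hF
  obtain ⟨y, hy, -⟩ := h x hx
  obtain ⟨m, hm, hmin⟩ := Set.exists_min_image (F ∩ S) id (hS.inter_of_right F) ⟨y, hy⟩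
  refine ⟨m, hm.2, hm.1, fun x hx => ?_⟩
  obtain ⟨y, hy, hyx⟩ := h x hx
  exact (hmin y hy).trans hyx

def l1PairDists (P : Finset (ℝ × ℝ)) : Set ℝ :=
  {d | ∃ p ∈ P, ∃ q ∈ P, p ≠ q ∧ d = l1dist p q}

section l1UnitDiskGraph

variable {P : Finset (ℝ × ℝ)}

lemma l1PairDists_finite (P : Finset (ℝ × ℝ)) : (l1PairDists P).Finite := by
  refine ((P.finite_toSet.prod P.finite_toSet).image fun pq => l1dist pq.1 pq.2).subset ?_
  rintro d ⟨p, hp, q, hq, -, rfl⟩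
  exact ⟨(p, q), ⟨hp, hq⟩, rfl⟩

lemma pos_of_mem_l1PairDists {d : ℝ} (hd : d ∈ l1PairDists P) : 0 < d := by
  obtain ⟨p, -, q, -, hpq, rfl⟩ := hd
  exact l1dist_pos hpq

lemma l1dist_mem_l1PairDists {p q : {p // p ∈ P}} (hpq : p ≠ q) :
    l1dist p q ∈ l1PairDists P :=
  ⟨p, p.2, q, q.2, Subtype.coe_ne_coe.mpr hpq, rfl⟩

lemma l1wdist_congr {r r' : ℝ} (h : l1UnitDiskGraph P r = l1UnitDiskGraph P r') :
    l1wdist P r = l1wdist P r' := by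
  unfold l1wdist l1WalkWeight
  rw [h]

lemma exists_mem_l1PairDists_l1UnitDiskGraph_eq {r : ℝ} {u v : {p // p ∈ P}}
    (huv : (l1UnitDiskGraph P r).Adj u v) :
    ∃ r₀ ∈ l1PairDists P, r₀ ≤ r ∧ l1UnitDiskGraph P r₀ = l1UnitDiskGraph P r := by
  set T := l1PairDists P ∩ Set.Iic r
  have hT : T.Finite := (l1PairDists_finite P).inter_of_left _
  have hr₀ : sSup T ∈ T := Set.Nonempty.csSup_mem ⟨_, l1dist_mem_l1PairDists huv.1, huv.2⟩ hT
  refine ⟨sSup T, hr₀.1, hr₀.2, ?_⟩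
  ext p q
  refine and_congr_right fun hpq => ⟨fun h => h.trans hr₀.2, fun h => ?_⟩
  exact le_csSup hT.bddAbove ⟨l1dist_mem_l1PairDists hpq, h⟩

end l1UnitDiskGraph

theorem stmt5_general (P : Finset (ℝ × ℝ))
    (s t : ℝ × ℝ) (hs : s ∈ P) (ht : t ∈ P) (hst : s ≠ t)
    (lam : ℝ)
    (hex : ∃ r : ℝ, 0 < r ∧ (l1UnitDiskGraph P r).Reachable ⟨s, hs⟩ ⟨t, ht⟩ ∧
      l1wdist P r ⟨s, hs⟩ ⟨t, ht⟩ ≤ lam) :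
    ∃ rstar : ℝ,
      IsLeast {r : ℝ | 0 < r ∧ (l1UnitDiskGraph P r).Reachable ⟨s, hs⟩ ⟨t, ht⟩ ∧
        l1wdist P r ⟨s, hs⟩ ⟨t, ht⟩ ≤ lam} rstar ∧
      ∃ p ∈ P, ∃ q ∈ P, p ≠ q ∧ rstar = l1dist p q := by
  set F := {r : ℝ | 0 < r ∧ (l1UnitDiskGraph P r).Reachable ⟨s, hs⟩ ⟨t, ht⟩ ∧
    l1wdist P r ⟨s, hs⟩ ⟨t, ht⟩ ≤ lam}
  have hlower : ∀ r ∈ F, ∃ r₀ ∈ F ∩ l1PairDists P, r₀ ≤ r := by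
    rintro r ⟨-, ⟨w⟩, hdist⟩
    have hfirst := w.adj_snd (w.not_nil_of_ne fun h => hst (congrArg Subtype.val h))
    obtain ⟨r₀, hr₀, hle, hG⟩ := exists_mem_l1PairDists_l1UnitDiskGraph_eq hfirst
    exact ⟨r₀, ⟨⟨pos_of_mem_l1PairDists hr₀, hG ▸ ⟨w⟩, l1wdist_congr hG ▸ hdist⟩, hr₀⟩, hle⟩
  obtain ⟨m, ⟨p, hp, q, hq, hpq, rfl⟩, hm⟩ :=
    Set.exists_mem_isLeast_of_forall_exists_le (l1PairDists_finite P) hex hlower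
  exact ⟨_, hm, p, hp, q, hq, hpq, rfl⟩

theorem stmt5 (P : Finset (ℝ × ℝ))
    (s t : ℝ × ℝ) (hs : s ∈ P) (ht : t ∈ P) (hst : s ≠ t)
    (lam : ℝ) (hlam : 0 ≤ lam)
    (hex : ∃ r : ℝ, 0 < r ∧ (l1UnitDiskGraph P r).Reachable ⟨s, hs⟩ ⟨t, ht⟩ ∧
      l1wdist P r ⟨s, hs⟩ ⟨t, ht⟩ ≤ lam) :
    ∃ rstar : ℝ,
      IsLeast {r : ℝ | 0 < r ∧ (l1UnitDiskGraph P r).Reachable ⟨s, hs⟩ ⟨t, ht⟩ ∧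
        l1wdist P r ⟨s, hs⟩ ⟨t, ht⟩ ≤ lam} rstar ∧
      ∃ p ∈ P, ∃ q ∈ P, p ≠ q ∧ rstar = l1dist p q :=
  stmt5_general P s t hs ht hst lam hex
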